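/- arXiv:2402.19257 — 2 statements merged into one kernel-verified Lean document; each statement's English description precedes it below -/
import Mathlib

section
/- Let G be a connected finite simple graph with edge weights ω: E(G) → ℚ>0 and thresholds τ: V(G) → ℚ≥0, and let μ = min{ω(e) : e ∈ E(G)}. Suppose every vertex u satisfies τ(u) ≥ (∑_{e incident to u} ω(e)) − μ, and suppose some vertex x satisfies τ(x) ≥ ∑_{e incident to x} ω(e). Then τ is a degenerate threshold assignment for G, i.e., every nonempty induced subgraph H of G has a vertex y with τ(y) ≥ ∑_{e ∈ E(y,H)} ω(e). -/
open Finset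

variable {V : Type*}

/-- Total weight of edges between `x` and active set `A`. -/
def Influence [Fintype V] [DecidableEq V] (G : SimpleGraph V) [DecidableRel G.Adj]
    (ω : Sym2 V → ℚ) (A : Finset V) (x : V) : ℚ :=
  ∑ y ∈ A.filter (G.Adj x), ω s(x, y)

/-- Weighted activation process started from `A₀`. -/
def ActiveW [Fintype V] [DecidableEq V] (G : SimpleGraph V) [DecidableRel G.Adj]
    (ω : Sym2 V → ℚ) (τ : V → ℚ) (A₀ : Finset V) : ℕ → Finset V
  | 0 => A₀
  | t + 1 => ActiveW G ω τ A₀ t ∪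
      Finset.univ.filter (fun x => τ x ≤ Influence G ω (ActiveW G ω τ A₀ t) x)

/-- `A₀` is a target set (dynamic monopoly): every vertex eventually activates. -/
def IsTargetSetW [Fintype V] [DecidableEq V] (G : SimpleGraph V) [DecidableRel G.Adj]
    (ω : Sym2 V → ℚ) (τ : V → ℚ) (A₀ : Finset V) : Prop :=
  ∀ v : V, ∃ t, v ∈ ActiveW G ω τ A₀ t

/-- Incentive activation process for incentive assignment `p`. -/
def ActiveP [Fintype V] [DecidableEq V] (G : SimpleGraph V) [DecidableRel G.Adj]
    (ω : Sym2 V → ℚ) (τ : V → ℚ) (p : V → ℚ) : ℕ → Finset V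
  | 0 => Finset.univ.filter (fun v => τ v ≤ p v)
  | t + 1 => ActiveP G ω τ p t ∪
      Finset.univ.filter (fun x => τ x ≤ Influence G ω (ActiveP G ω τ p t) x + p x)

/-- `p` is a target vector: its incentive process activates every vertex. -/
def IsTargetVector [Fintype V] [DecidableEq V] (G : SimpleGraph V) [DecidableRel G.Adj]
    (ω : Sym2 V → ℚ) (τ : V → ℚ) (p : V → ℚ) : Prop :=
  ∀ v : V, ∃ t, v ∈ ActiveP G ω τ p t

/-- `τ` is a degenerate threshold assignment: every nonempty induced subgraph
(given by its vertex set `S`) has a vertex whose threshold is at least the total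
weight of the edges of the induced subgraph incident to it. -/
def DegenerateW [Fintype V] [DecidableEq V] (G : SimpleGraph V) [DecidableRel G.Adj]
    (ω : Sym2 V → ℚ) (τ : V → ℚ) : Prop :=
  ∀ S : Finset V, S.Nonempty → ∃ x ∈ S, Influence G ω S x ≤ τ x

/-- `u` is a degeneracy ordering: each vertex's threshold is at least the total
weight of edges to earlier vertices. -/
def IsDegOrder [Fintype V] [DecidableEq V] (G : SimpleGraph V) [DecidableRel G.Adj]
    (ω : Sym2 V → ℚ) (τ : V → ℚ) (u : Fin (Fintype.card V) ≃ V) : Prop :=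
  ∀ i, (∑ j ∈ Finset.univ.filter (fun j => j < i ∧ G.Adj (u i) (u j)), ω s(u i, u j)) ≤ τ (u i)

/-- Unweighted activation process. -/
def ActiveU [Fintype V] [DecidableEq V] (G : SimpleGraph V) [DecidableRel G.Adj]
    (τ : V → ℕ) (A₀ : Finset V) : ℕ → Finset V
  | 0 => A₀
  | t + 1 => ActiveU G τ A₀ t ∪
      Finset.univ.filter (fun x => τ x ≤ ((ActiveU G τ A₀ t).filter (G.Adj x)).card)

def IsTargetSetU [Fintype V] [DecidableEq V] (G : SimpleGraph V) [DecidableRel G.Adj]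
    (τ : V → ℕ) (A₀ : Finset V) : Prop :=
  ∀ v : V, ∃ t, v ∈ ActiveU G τ A₀ t

/-! If `S` is the whole vertex set, the vertex with full threshold works. Otherwise connectivity
gives an edge `xy` leaving `S`, so inside `S` the vertex `x` misses at least `ω xy ≥ μ` of its
total incident weight, and the near-full threshold of `x` suffices. -/

section Influence

variable [Fintype V] [DecidableEq V] {G : SimpleGraph V} [DecidableRel G.Adj]
  {ω : Sym2 V → ℚ} {S T : Finset V} {x y : V}

theorem influence_insert (hy : y ∉ S) (hxy : G.Adj x y) :
    Influence G ω (insert y S) x = ω s(x, y) + Influence G ω S x := by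
  rw [Influence, filter_insert, if_pos hxy, sum_insert (fun h => hy (mem_filter.mp h).1)]
  rfl

theorem influence_mono (hω : ∀ e ∈ G.edgeSet, 0 ≤ ω e) (hST : S ⊆ T) :
    Influence G ω S x ≤ Influence G ω T x :=
  sum_le_sum_of_subset_of_nonneg (filter_subset_filter _ hST)
    fun _ hz _ => hω _ (G.mem_edgeSet.mpr (mem_filter.mp hz).2)

end Influence

theorem SimpleGraph.Connected.exists_adj_mem_not_mem {G : SimpleGraph V} (hG : G.Connected)
    {S : Set V} (hS : S.Nonempty) (hSu : S ≠ Set.univ) : ∃ x ∈ S, ∃ y ∉ S, G.Adj x y := by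
  obtain ⟨a, ha⟩ := hS
  obtain ⟨b, hb⟩ := (Set.ne_univ_iff_exists_notMem S).mp hSu
  obtain ⟨d, -, hd, hd'⟩ := (hG a b).some.exists_boundary_dart S ha hb
  exact ⟨d.fst, hd, d.snd, hd', d.adj⟩

theorem degenerate_of_near_full_thresholds_general [Fintype V] [DecidableEq V] (G : SimpleGraph V)
    [DecidableRel G.Adj] (ω : Sym2 V → ℚ) (τ : V → ℚ) (μ : ℚ)
    (hconn : G.Connected)
    (hpos : ∀ e ∈ G.edgeSet, 0 < ω e)
    (hμ : IsLeast (ω '' G.edgeSet) μ)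
    (hall : ∀ v, Influence G ω Finset.univ v - μ ≤ τ v)
    (hx : ∃ x, Influence G ω Finset.univ x ≤ τ x) :
    DegenerateW G ω τ := by
  intro S hS
  by_cases hSu : S = univ
  · obtain ⟨x, hx⟩ := hx
    exact ⟨x, hSu ▸ mem_univ x, hSu ▸ hx⟩
  obtain ⟨x, hxS, y, hyS, hxy⟩ := hconn.exists_adj_mem_not_mem (S := (S : Set V))
    (by exact_mod_cast hS) (by simpa [← coe_univ] using hSu)
  refine ⟨x, hxS, ?_⟩
  have hgap : Influence G ω S x + ω s(x, y) ≤ Influence G ω univ x := by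
    rw [add_comm, ← influence_insert hyS hxy]
    exact influence_mono (fun e he => (hpos e he).le) (subset_univ _)
  have hμxy : μ ≤ ω s(x, y) := hμ.2 ⟨s(x, y), hxy, rfl⟩
  linarith [hall x]

/-- in a connected graph with positive weights, if every vertex's
threshold is at least its total incident weight minus the minimum edge weight,
and some vertex's threshold is at least its full incident weight, then `τ` is
degenerate. -/
theorem degenerate_of_near_full_thresholds [Fintype V] [DecidableEq V] (G : SimpleGraph V)
    [DecidableRel G.Adj] (ω : Sym2 V → ℚ) (τ : V → ℚ) (μ : ℚ)
    (hconn : G.Connected) (hne : G.edgeSet.Nonempty)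
    (hpos : ∀ e ∈ G.edgeSet, 0 < ω e) (hτ : ∀ v, 0 ≤ τ v)
    (hμ : IsLeast (ω '' G.edgeSet) μ)
    (hall : ∀ v, Influence G ω Finset.univ v - μ ≤ τ v)
    (hx : ∃ x, Influence G ω Finset.univ x ≤ τ x) :
    DegenerateW G ω τ :=
  degenerate_of_near_full_thresholds_general G ω τ μ hconn hpos hμ hall hx
end

section
/- Let (G, ω, τ) be a weighted graph and let D ⊆ V(G) be such that for every vertex v ∉ D, τ(v) ≤ ∑_{e ∈ E(v,G)} ω(e). Then D is a target set for the weighted activation process on (G, ω, τ) if and only if there is an ordering w₁,…,w_m of V(G)∖D such that for each i, τ(wᵢ) ≤ ∑ ω(e) over edges e from wᵢ to D ∪ {w₁,…,w_{i−1}}. -/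
open Finset

variable {V : Type*}

lemma influence_mono_s15 [Fintype V] [DecidableEq V] (G : SimpleGraph V) [DecidableRel G.Adj]
    (ω : Sym2 V → ℚ) (hω : ∀ e ∈ G.edgeSet, 0 ≤ ω e) {A B : Finset V} (hAB : A ⊆ B) (x : V) :
    Influence G ω A x ≤ Influence G ω B x := by
  apply Finset.sum_le_sum_of_subset_of_nonneg
  · exact Finset.filter_subset_filter _ hAB
  · intro y hy _
    exact hω _ ((Finset.mem_filter.mp hy).2)

lemma activeW_mono [Fintype V] [DecidableEq V] (G : SimpleGraph V) [DecidableRel G.Adj]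
    (ω : Sym2 V → ℚ) (τ : V → ℚ) (A₀ : Finset V) {s t : ℕ} (hst : s ≤ t) :
    ActiveW G ω τ A₀ s ⊆ ActiveW G ω τ A₀ t := by
  induction t with
  | zero => simp_all
  | succ n ih =>
    rcases Nat.lt_or_ge s (n+1) with h | h
    · exact (ih (Nat.lt_succ_iff.mp h)).trans Finset.subset_union_left
    · have : s = n + 1 := le_antisymm hst h
      subst this; exact subset_rfl

/-- assuming every vertex outside `D` has threshold at most its
total incident weight, `D` is a target set iff `V ∖ D` admits an elimination
ordering in which each vertex is activated by `D` and the earlier vertices. -/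
theorem targetSet_iff_elimination_order [Fintype V] [DecidableEq V] (G : SimpleGraph V)
    [DecidableRel G.Adj] (ω : Sym2 V → ℚ) (τ : V → ℚ)
    (hω : ∀ e ∈ G.edgeSet, 0 ≤ ω e) (hτ : ∀ v, 0 ≤ τ v)
    (D : Finset V)
    (hbound : ∀ v ∉ D, τ v ≤ Influence G ω Finset.univ v) :
    IsTargetSetW G ω τ D ↔
      ∃ l : List V, l.Nodup ∧ (∀ v : V, v ∈ l ↔ v ∉ D) ∧
        ∀ (i : ℕ) (h : i < l.length),
          τ (l.get ⟨i, h⟩) ≤ Influence G ω (D ∪ (l.take i).toFinset) (l.get ⟨i, h⟩) := by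
  classical
  constructor
  · intro hT
    let tm : V → ℕ := fun v => Nat.find (hT v)
    have tm_spec : ∀ v, v ∈ ActiveW G ω τ D (tm v) := fun v => Nat.find_spec (hT v)
    have tm_le : ∀ v s, v ∈ ActiveW G ω τ D s → tm v ≤ s := fun v s h => Nat.find_le h
    have tm_min : ∀ v s, s < tm v → v ∉ ActiveW G ω τ D s := fun v s h => Nat.find_min (hT v) h
    refine ⟨((Finset.univ.filter (fun v => v ∉ D)).toList).mergeSort
      (fun a b => decide (tm a ≤ tm b)), ?_, ?_, ?_⟩ <;>
      [skip; skip; intro i h] <;>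
      set l : List V := ((Finset.univ.filter (fun v => v ∉ D)).toList).mergeSort
        (fun a b => decide (tm a ≤ tm b)) with hl
    · exact (List.mergeSort_perm _ _).nodup_iff.mpr (Finset.nodup_toList _)
    · intro v
      rw [(List.mergeSort_perm _ _).mem_iff, Finset.mem_toList, Finset.mem_filter]
      simp
    · have hperm : l.Perm ((Finset.univ.filter (fun v => v ∉ D)).toList) :=
        List.mergeSort_perm _ _
      have hmem : ∀ v : V, v ∈ l ↔ v ∉ D := by
        intro v
        rw [hperm.mem_iff, Finset.mem_toList, Finset.mem_filter]
        simp
      have hsorted : List.Pairwise (fun a b => tm a ≤ tm b) l := by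
        have h' : l.Pairwise (fun a b => decide (tm a ≤ tm b) = true) := by
          rw [hl]
          exact List.pairwise_mergeSort (le := fun a b => decide (tm a ≤ tm b))
            (fun a b c h1 h2 => by simp_all; omega)
            (fun a b => by simpa using le_total _ _) _
        exact h'.imp (fun h => by simpa using h)
      set x := l.get ⟨i, h⟩ with hx
      have hxD : x ∉ D := (hmem x).mp (List.get_mem _ _)
      have hx0 : tm x ≠ 0 := by
        intro h0
        have := tm_spec x
        rw [h0] at this
        exact hxD this
      obtain ⟨s, hs⟩ : ∃ s, tm x = s + 1 := ⟨tm x - 1, (Nat.succ_pred_eq_of_ne_zero hx0).symm⟩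
      have hxin : x ∈ ActiveW G ω τ D (s + 1) := by
        have := tm_spec x; rwa [hs] at this
      have hxnot : x ∉ ActiveW G ω τ D s := tm_min x s (by omega)
      have hτx : τ x ≤ Influence G ω (ActiveW G ω τ D s) x := by
        rw [show ActiveW G ω τ D (s+1) = ActiveW G ω τ D s ∪
          Finset.univ.filter (fun y => τ y ≤ Influence G ω (ActiveW G ω τ D s) y) from rfl,
          Finset.mem_union] at hxin
        rcases hxin with h1 | h1
        · exact absurd h1 hxnot
        · exact (Finset.mem_filter.mp h1).2
      have hsub : ActiveW G ω τ D s ⊆ D ∪ (l.take i).toFinset := by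
        intro y hy
        rw [Finset.mem_union]
        by_cases hyD : y ∈ D
        · exact Or.inl hyD
        · right
          have hyl : y ∈ l := (hmem y).mpr hyD
          have hty : tm y ≤ s := tm_le y s hy
          obtain ⟨j, hjy⟩ := List.mem_iff_get.mp hyl
          have hji : j.1 < i := by
            rcases Nat.lt_trichotomy j.1 i with hc | hc | hc
            · exact hc
            · exfalso
              have hyx : y = x := by rw [← hjy, hx]; congr 1; exact Fin.ext hc
              rw [hyx] at hty; omega
            · exfalso
              have : tm x ≤ tm y := by
                rw [hx, ← hjy]
                exact List.Pairwise.rel_get_of_lt hsorted (by exact hc)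
              omega
          rw [List.mem_toFinset, ← hjy]
          have hget : (l.take i).get ⟨j.1, by simp [j.2, hji]⟩ = l.get j := by
            simp [List.getElem_take]
          rw [← hget]
          exact List.get_mem _ _
      exact hτx.trans (influence_mono_s15 G ω hω hsub x)
  · rintro ⟨l, hnd, hmem, hord⟩
    have key : ∀ i, D ∪ (l.take i).toFinset ⊆ ActiveW G ω τ D i := by
      intro i
      induction i with
      | zero => simp [ActiveW]
      | succ n ih =>
        intro y hy
        rw [show ActiveW G ω τ D (n+1) = ActiveW G ω τ D n ∪
          Finset.univ.filter (fun z => τ z ≤ Influence G ω (ActiveW G ω τ D n) z) from rfl,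
          Finset.mem_union]
        rcases Nat.lt_or_ge n l.length with h | h
        · have hdecomp : y ∈ D ∪ (l.take n).toFinset ∨ y = l.get ⟨n, h⟩ := by
            rw [Finset.mem_union, List.mem_toFinset, List.take_succ,
              List.mem_append] at hy
            rcases hy with h1 | h1 | h1
            · exact Or.inl (by rw [Finset.mem_union]; exact Or.inl h1)
            · exact Or.inl (by rw [Finset.mem_union, List.mem_toFinset]; exact Or.inr h1)
            · right
              simp [List.getElem?_eq_getElem h] at h1
              exact h1
          rcases hdecomp with h1 | h1
          · exact Or.inl (ih h1)
          · right
            rw [Finset.mem_filter]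
            refine ⟨Finset.mem_univ _, ?_⟩
            rw [h1]
            exact (hord n h).trans (influence_mono_s15 G ω hω ih _)
        · rw [List.take_of_length_le (h.trans (Nat.le_succ n))] at hy
          have : y ∈ D ∪ (l.take n).toFinset := by
            rwa [List.take_of_length_le h]
          exact Or.inl (ih this)
    intro v
    by_cases hvD : v ∈ D
    · exact ⟨0, hvD⟩
    · refine ⟨l.length, key l.length ?_⟩
      rw [Finset.mem_union, List.take_length, List.mem_toFinset]
      exact Or.inr ((hmem v).mpr hvD)
end
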